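/- Let W : ℝ^{m×d} → [0,∞) be convex and suppose there exists C ≥ 1 and Λ ≥ 0 such that W(−ξ) ≥ (1/C) W(ξ) − Λ for all ξ. Define m(ξ) := min{W(ξ), W(−ξ)} and φ(ξ) := C·max{0, co(m)(ξ) − W(0)}, where co(m) is the convex envelope of m. Then φ is convex, even, nonnegative, satisfies φ(0) = 0, and there is a constant Λ' ≥ 0 with W(ξ) − Λ' ≤ φ(ξ) ≤ C·W(ξ) + Λ' for all ξ. -/

import Mathlib

open Set Filter

noncomputable section

/-- The convex envelope of `f` on a set `s`. -/
def convexEnvOn {E : Type*} [AddCommGroup E] [Module ℝ E] (s : Set E) (f : E → ℝ) (x : E) : ℝ :=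
  sSup {y : ℝ | ∃ g : E → ℝ, ConvexOn ℝ s g ∧ (∀ z ∈ s, g z ≤ f z) ∧ y = g x}

section helpers

variable {E : Type*} [AddCommGroup E] [Module ℝ E]

lemma mem_envSet {f g : E → ℝ} (hg : ConvexOn ℝ univ g) (hgf : ∀ z ∈ univ, g z ≤ f z) (x : E) :
    g x ∈ {y : ℝ | ∃ g : E → ℝ, ConvexOn ℝ univ g ∧ (∀ z ∈ univ, g z ≤ f z) ∧ y = g x} :=
  ⟨g, hg, hgf, rfl⟩

lemma envSet_bddAbove (f : E → ℝ) (x : E) :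
    BddAbove {y : ℝ | ∃ g : E → ℝ, ConvexOn ℝ univ g ∧ (∀ z ∈ univ, g z ≤ f z) ∧ y = g x} :=
  ⟨f x, by rintro y ⟨g, _, hgf, rfl⟩; exact hgf x (mem_univ x)⟩

lemma le_convexEnvOn {f g : E → ℝ} (hg : ConvexOn ℝ univ g) (hgf : ∀ z ∈ univ, g z ≤ f z)
    (x : E) : g x ≤ convexEnvOn univ f x :=
  le_csSup (envSet_bddAbove f x) (mem_envSet hg hgf x)

lemma convexEnvOn_le {f g0 : E → ℝ} (hg0 : ConvexOn ℝ univ g0) (hg0f : ∀ z ∈ univ, g0 z ≤ f z)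
    (x : E) : convexEnvOn univ f x ≤ f x := by
  refine csSup_le ⟨g0 x, mem_envSet hg0 hg0f x⟩ ?_
  rintro y ⟨g, _, hgf, rfl⟩
  exact hgf x (mem_univ x)

lemma convexEnvOn_convex {f g0 : E → ℝ} (hg0 : ConvexOn ℝ univ g0)
    (hg0f : ∀ z ∈ univ, g0 z ≤ f z) : ConvexOn ℝ univ (convexEnvOn univ f) := by
  refine ⟨convex_univ, fun x _ y _ a b ha hb hab => ?_⟩
  refine csSup_le ⟨g0 _, mem_envSet hg0 hg0f _⟩ ?_
  rintro z ⟨g, hg, hgf, rfl⟩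
  calc g (a • x + b • y) ≤ a • g x + b • g y := hg.2 (mem_univ x) (mem_univ y) ha hb hab
    _ ≤ a • convexEnvOn univ f x + b • convexEnvOn univ f y := by
        simp only [smul_eq_mul]
        exact add_le_add (mul_le_mul_of_nonneg_left (le_convexEnvOn hg hgf x) ha)
          (mul_le_mul_of_nonneg_left (le_convexEnvOn hg hgf y) hb)

lemma convexOn_neg_comp {g : E → ℝ} (hg : ConvexOn ℝ univ g) :
    ConvexOn ℝ univ (fun z => g (-z)) := by
  refine ⟨convex_univ, fun x _ y _ a b ha hb hab => ?_⟩
  have := hg.2 (mem_univ (-x)) (mem_univ (-y)) ha hb hab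
  simpa [smul_neg, neg_add, add_comm] using this

lemma convexEnvOn_even {f : E → ℝ} (hf : ∀ z, f (-z) = f z) (x : E) :
    convexEnvOn univ f (-x) = convexEnvOn univ f x := by
  unfold convexEnvOn
  congr 1
  ext y
  constructor
  · rintro ⟨g, hg, hgf, rfl⟩
    exact ⟨fun z => g (-z), convexOn_neg_comp hg,
      fun z _ => (hf z) ▸ hgf (-z) (mem_univ _), rfl⟩
  · rintro ⟨g, hg, hgf, rfl⟩
    exact ⟨fun z => g (-z), convexOn_neg_comp hg,
      fun z _ => (hf z) ▸ hgf (-z) (mem_univ _), by simp⟩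

end helpers

/-- Construction of the even convex function `φ` comparable to an almost-even convex
integrand `W`: with `m(ξ) = min{W ξ, W (−ξ)}` and
`φ(ξ) = C · max{0, co(m)(ξ) − W 0}`, `φ` is convex, even, nonnegative, vanishes at `0`,
and satisfies `W ξ − Λ' ≤ φ ξ ≤ C · W ξ + Λ'` for some `Λ' ≥ 0`. -/
theorem stmt4 (m d : ℕ) (W : EuclideanSpace ℝ (Fin m × Fin d) → ℝ)
    (hconv : ConvexOn ℝ univ W) (h0 : ∀ ξ, 0 ≤ W ξ)
    (C Λ : ℝ) (hC : 1 ≤ C) (hΛ : 0 ≤ Λ)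
    (halmosteven : ∀ ξ, W ξ / C - Λ ≤ W (-ξ)) :
    ConvexOn ℝ univ
      (fun ξ : EuclideanSpace ℝ (Fin m × Fin d) =>
        C * max 0 (convexEnvOn univ (fun ζ => min (W ζ) (W (-ζ))) ξ - W 0)) ∧
    (∀ ξ : EuclideanSpace ℝ (Fin m × Fin d),
        C * max 0 (convexEnvOn univ (fun ζ => min (W ζ) (W (-ζ))) (-ξ) - W 0) =
          C * max 0 (convexEnvOn univ (fun ζ => min (W ζ) (W (-ζ))) ξ - W 0)) ∧
    (∀ ξ : EuclideanSpace ℝ (Fin m × Fin d),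
        0 ≤ C * max 0 (convexEnvOn univ (fun ζ => min (W ζ) (W (-ζ))) ξ - W 0)) ∧
    (C * max 0 (convexEnvOn univ (fun ζ => min (W ζ) (W (-ζ))) (0:EuclideanSpace ℝ (Fin m × Fin d)) - W 0) = 0) ∧
    ∃ Λ' : ℝ, 0 ≤ Λ' ∧ ∀ ξ : EuclideanSpace ℝ (Fin m × Fin d),
        W ξ - Λ' ≤ C * max 0 (convexEnvOn univ (fun ζ => min (W ζ) (W (-ζ))) ξ - W 0) ∧
        C * max 0 (convexEnvOn univ (fun ζ => min (W ζ) (W (-ζ))) ξ - W 0) ≤ C * W ξ + Λ' := by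
  have hC0 : (0:ℝ) < C := lt_of_lt_of_le one_pos hC
  set M : EuclideanSpace ℝ (Fin m × Fin d) → ℝ := fun ζ => min (W ζ) (W (-ζ)) with hM
  have hMeven : ∀ z, M (-z) = M z := by
    intro z; simp [hM, min_comm]
  -- the zero function is admissible
  have hg0 : ConvexOn ℝ univ (fun _ : EuclideanSpace ℝ (Fin m × Fin d) => (0:ℝ)) :=
    convexOn_const 0 convex_univ
  have hg0M : ∀ z ∈ (univ : Set (EuclideanSpace ℝ (Fin m × Fin d))), (0:ℝ) ≤ M z :=
    fun z _ => le_min (h0 z) (h0 (-z))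
  -- the function W/C - Λ is admissible
  have hg1 : ConvexOn ℝ univ (fun ζ => W ζ / C - Λ) := by
    refine ⟨convex_univ, fun x _ y _ a b ha hb hab => ?_⟩
    have h1 : W (a • x + b • y) ≤ a * W x + b * W y := by
      simpa [smul_eq_mul] using hconv.2 (mem_univ x) (mem_univ y) ha hb hab
    simp only [smul_eq_mul]
    have h2 : W (a • x + b • y) / C ≤ (a * W x + b * W y) / C := by
      exact div_le_div_of_nonneg_right h1 hC0.le
    have h3 : (a * W x + b * W y) / C = a * (W x / C) + b * (W y / C) := by ring
    nlinarith [h2, h3]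
  have hg1M : ∀ z ∈ (univ : Set (EuclideanSpace ℝ (Fin m × Fin d))), W z / C - Λ ≤ M z := by
    intro z _
    refine le_min ?_ (halmosteven z)
    have : W z / C ≤ W z := by
      rw [div_le_iff₀ hC0]
      nlinarith [h0 z]
    linarith
  have henv_conv : ConvexOn ℝ univ (convexEnvOn univ M) := convexEnvOn_convex hg0 hg0M
  have henv_le : ∀ x, convexEnvOn univ M x ≤ M x := convexEnvOn_le hg0 hg0M
  have henv_ge : ∀ x, W x / C - Λ ≤ convexEnvOn univ M x := le_convexEnvOn hg1 hg1M
  have henv_even : ∀ x, convexEnvOn univ M (-x) = convexEnvOn univ M x :=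
    convexEnvOn_even hMeven
  refine ⟨?_, ?_, ?_, ?_, ?_⟩
  · -- convexity
    have h1 : ConvexOn ℝ univ (fun ξ => convexEnvOn univ M ξ - W 0) := by
      exact henv_conv.sub (concaveOn_const (W 0) convex_univ)
    have h2 : ConvexOn ℝ univ (fun ξ => max 0 (convexEnvOn univ M ξ - W 0)) := by
      have := (convexOn_const (0:ℝ) convex_univ).sup h1
      exact this
    have h3 := h2.smul (le_of_lt hC0)
    simpa [smul_eq_mul] using h3
  · -- evenness
    intro ξ; rw [henv_even ξ]
  · -- nonnegativity
    intro ξ; exact mul_nonneg hC0.le (le_max_left _ _)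
  · -- value at 0
    have : convexEnvOn univ M 0 ≤ W 0 := by
      have := henv_le 0
      simpa [hM] using this
    have hmax : max 0 (convexEnvOn univ M 0 - W 0) = 0 := max_eq_left (by linarith)
    rw [hmax, mul_zero]
  · -- comparison with W
    refine ⟨C * (Λ + W 0), mul_nonneg hC0.le (add_nonneg hΛ (h0 0)), fun ξ => ?_⟩
    constructor
    · have h1 := henv_ge ξ
      have h2 : convexEnvOn univ M ξ - W 0 ≤ max 0 (convexEnvOn univ M ξ - W 0) :=
        le_max_right _ _
      have h3 : C * (W ξ / C) = W ξ := by field_simp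
      nlinarith [h1, h2, le_max_left (0:ℝ) (convexEnvOn univ M ξ - W 0)]
    · have h1 : convexEnvOn univ M ξ ≤ W ξ := (henv_le ξ).trans (min_le_left _ _)
      have h2 : max 0 (convexEnvOn univ M ξ - W 0) ≤ W ξ := by
        refine max_le (h0 ξ) ?_
        have := h0 0
        linarith
      have h3 := mul_le_mul_of_nonneg_left h2 hC0.le
      have h4 : 0 ≤ C * (Λ + W 0) := mul_nonneg hC0.le (add_nonneg hΛ (h0 0))
      linarith
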